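/- Let N(m) denote the cardinality of the NP-LOCO code NPC(m). Then (N(m))^{1/m} → (3 + √17)/2 as m → ∞. (Hence the constrained part of the NP-LOCO coding scheme has capacity log₂((3 + √17)/2) ≈ 1.8325 input bits per coded symbol.) -/

import Mathlib

/-- The NP-LOCO code: words of length `m` over the alphabet `{0,1,2,3}`
(position `m-1` most significant) containing no contiguous subword `u 3 v` with
`u, v ∈ {0,1}` and no contiguous subword `u 0 v` with `u, v ∈ {2,3}`. -/
def NPC (m : ℕ) : Set (Fin m → Fin 4) :=
  {c | ∀ i : ℕ, ∀ h : i + 2 < m,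
      ¬((c ⟨i + 2, h⟩ ∈ ({0, 1} : Set (Fin 4)) ∧ c ⟨i + 1, by omega⟩ = 3 ∧
            c ⟨i, by omega⟩ ∈ ({0, 1} : Set (Fin 4))) ∨
        (c ⟨i + 2, h⟩ ∈ ({2, 3} : Set (Fin 4)) ∧ c ⟨i + 1, by omega⟩ = 0 ∧
            c ⟨i, by omega⟩ ∈ ({2, 3} : Set (Fin 4))))}

/-!
Classify the admissible words of length `k + 2` by their two most significant letters `y x`.
Call the pair restrictive when `y = 3, x ∈ {0, 1}` or `y = 0, x ∈ {2, 3}`: a restrictive pair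
can be extended by two letters, any other pair by four, and exactly one extension of a
non-restrictive pair is restrictive. With `R k`, `F k` the numbers of words ending in a
restrictive resp. non-restrictive pair, `N (k + 3) = 2 R k + 4 F k` and `R (k + 1) = F k`, whence
`N (k + 4) = 3 N (k + 3) + 2 N (k + 2)`. Since `λ = (3 + √17) / 2` is the positive root of
`x² = 3 x + 2` and the recurrence has nonnegative coefficients, `N m / λ ^ m` stays between two
positive constants, so `N m ^ (1 / m) → λ`.
-/

open Finset Filter Topology

section Admissible

variable {α : Type*}

def Admissible (ok : α → α → α → Bool) {m : ℕ} (c : Fin m → α) : Prop :=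
  ∀ i : ℕ, ∀ h : i + 2 < m, ok (c ⟨i + 2, h⟩) (c ⟨i + 1, by omega⟩) (c ⟨i, by omega⟩) = true

theorem admissible_snoc_iff {ok : α → α → α → Bool} {k : ℕ} {w : Fin (k + 2) → α} {z : α} :
    Admissible ok (Fin.snoc w z : Fin (k + 3) → α) ↔
      Admissible ok w ∧ ok z (w (Fin.last _)) (w (Fin.last _).castSucc) = true := by
  have snoc_of_lt (j : ℕ) (hj : j < k + 2) (hj' : j < k + 3) :
      (Fin.snoc w z : Fin (k + 3) → α) ⟨j, hj'⟩ = w ⟨j, hj⟩ :=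
    Fin.snoc_castSucc (i := ⟨j, hj⟩) ..
  have snoc_top (h : k + 2 < k + 3) : (Fin.snoc w z : Fin (k + 3) → α) ⟨k + 2, h⟩ = z :=
    Fin.snoc_last ..
  constructor
  · intro h
    refine ⟨fun i hi => ?_, ?_⟩
    · have := h i (by omega)
      rwa [snoc_of_lt (i + 2) hi, snoc_of_lt (i + 1) (by omega), snoc_of_lt i (by omega)] at this
    · have := h k (by omega)
      rwa [snoc_top, snoc_of_lt (k + 1) (by omega), snoc_of_lt k (by omega)] at this
  · rintro ⟨hw, hz⟩ i hi
    obtain hi | rfl : i + 2 < k + 2 ∨ i = k := by omega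
    · rw [snoc_of_lt (i + 2) hi, snoc_of_lt (i + 1) (by omega), snoc_of_lt i (by omega)]
      exact hw i hi
    · rw [snoc_top, snoc_of_lt (i + 1) (by omega), snoc_of_lt i (by omega)]
      exact hz

theorem Admissible.of_const {ok : α → α → α → Bool} {a : α} (h : ok a a a = true) (m : ℕ) :
    Admissible ok (fun _ : Fin m => a) := fun _ _ => h

variable [Fintype α]

open Classical in
noncomputable def admissibleWords (ok : α → α → α → Bool) (m : ℕ) : Finset (Fin m → α) :=
  {c | Admissible ok c}

theorem mem_admissibleWords {ok : α → α → α → Bool} {m : ℕ} {c : Fin m → α} :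
    c ∈ admissibleWords ok m ↔ Admissible ok c := by
  simp [admissibleWords]

theorem card_filter_admissibleWords_snoc [DecidableEq α] (ok : α → α → α → Bool)
    (p : α → α → Bool) (k : ℕ) :
    #{c ∈ admissibleWords ok (k + 3) | p (c (Fin.last _)) (c (Fin.last _).castSucc)} =
      ∑ w ∈ admissibleWords ok (k + 2),
        #{z | ok z (w (Fin.last _)) (w (Fin.last _).castSucc) && p z (w (Fin.last _))} := by
  rw [card_eq_sum_card_fiberwise (f := Fin.init) (t := admissibleWords ok (k + 2))]
  · refine sum_congr rfl fun w hw => ?_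
    refine card_nbij' (fun c => c (Fin.last _)) (Fin.snoc (α := fun _ => α) w) ?_ ?_ ?_ ?_
    · intro c hc
      simp only [coe_filter, Set.mem_ofPred_eq, mem_filter, mem_admissibleWords] at hc ⊢
      obtain ⟨⟨hc, hp⟩, rfl⟩ := hc
      rw [← Fin.snoc_init_self c, admissible_snoc_iff] at hc
      simp only [mem_univ, true_and, Bool.and_eq_true]
      exact ⟨hc.2, hp⟩
    · intro z hz
      simp only [coe_filter, Set.mem_ofPred_eq, mem_filter, mem_admissibleWords, Bool.and_eq_true,
        mem_univ, true_and] at hz ⊢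
      rw [admissible_snoc_iff, Fin.snoc_last, Fin.snoc_castSucc, Fin.init_snoc]
      exact ⟨⟨⟨mem_admissibleWords.1 hw, hz.1⟩, hz.2⟩, rfl⟩
    · intro c hc
      simp only [coe_filter, Set.mem_ofPred_eq, mem_filter] at hc
      rw [← hc.2]
      exact Fin.snoc_init_self c
    · intro z _
      exact Fin.snoc_last ..
  · intro c hc
    simp only [mem_filter, mem_coe, mem_admissibleWords] at hc ⊢
    rw [← Fin.snoc_init_self c, admissible_snoc_iff] at hc
    exact hc.1.1

end Admissible

def npOk (z y x : Fin 4) : Bool :=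
  !(((z == 0 || z == 1) && y == 3 && (x == 0 || x == 1)) ||
    ((z == 2 || z == 3) && y == 0 && (x == 2 || x == 3)))

theorem npOk_eq_true_iff (z y x : Fin 4) :
    npOk z y x = true ↔
      ¬((z ∈ ({0, 1} : Set (Fin 4)) ∧ y = 3 ∧ x ∈ ({0, 1} : Set (Fin 4))) ∨
        (z ∈ ({2, 3} : Set (Fin 4)) ∧ y = 0 ∧ x ∈ ({2, 3} : Set (Fin 4)))) := by
  simp only [Set.mem_insert_iff, Set.mem_singleton_iff]
  revert z y x
  decide

theorem NPC_eq_admissibleWords (m : ℕ) : NPC m = admissibleWords npOk m := by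
  ext c
  simp only [NPC, ← npOk_eq_true_iff, Set.mem_ofPred_eq, mem_coe, mem_admissibleWords, Admissible]

def IsRestrictive (y x : Fin 4) : Bool :=
  (y == 3 && (x == 0 || x == 1)) || (y == 0 && (x == 2 || x == 3))

theorem card_npOk (y x : Fin 4) : #{z | npOk z y x} = if IsRestrictive y x then 2 else 4 := by
  revert y x; decide

theorem card_npOk_isRestrictive (y x : Fin 4) :
    #{z | npOk z y x && IsRestrictive z y} = if IsRestrictive y x then 0 else 1 := by
  revert y x; decide

noncomputable def restrictiveCount (k : ℕ) : ℕ :=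
  #{c ∈ admissibleWords npOk (k + 2) | IsRestrictive (c (Fin.last _)) (c (Fin.last _).castSucc)}

noncomputable def freeCount (k : ℕ) : ℕ :=
  #{c ∈ admissibleWords npOk (k + 2) | ¬IsRestrictive (c (Fin.last _)) (c (Fin.last _).castSucc)}

theorem restrictiveCount_add_freeCount (k : ℕ) :
    restrictiveCount k + freeCount k = #(admissibleWords npOk (k + 2)) :=
  card_filter_add_card_filter_not _

theorem sum_ite_isRestrictive (k a b : ℕ) :
    ∑ w ∈ admissibleWords npOk (k + 2),
        (if IsRestrictive (w (Fin.last _)) (w (Fin.last _).castSucc) then a else b) =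
      a * restrictiveCount k + b * freeCount k := by
  rw [sum_ite, sum_const, sum_const, smul_eq_mul, smul_eq_mul, mul_comm, mul_comm _ b]
  rfl

theorem card_admissibleWords_npOk_add_three (k : ℕ) :
    #(admissibleWords npOk (k + 3)) = 2 * restrictiveCount k + 4 * freeCount k := by
  simpa [card_npOk, sum_ite_isRestrictive] using
    card_filter_admissibleWords_snoc npOk (fun _ _ => true) k

theorem restrictiveCount_succ (k : ℕ) : restrictiveCount (k + 1) = freeCount k := by
  rw [restrictiveCount, card_filter_admissibleWords_snoc]
  simp only [card_npOk_isRestrictive, sum_ite_isRestrictive]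
  ring

theorem card_admissibleWords_npOk_recurrence (k : ℕ) :
    #(admissibleWords npOk (k + 4)) =
      3 * #(admissibleWords npOk (k + 3)) + 2 * #(admissibleWords npOk (k + 2)) := by
  have h₃ := card_admissibleWords_npOk_add_three k
  have h₄ : #(admissibleWords npOk (k + 4)) =
      2 * restrictiveCount (k + 1) + 4 * freeCount (k + 1) :=
    card_admissibleWords_npOk_add_three (k + 1)
  have hsum₂ := restrictiveCount_add_freeCount k
  have hsum₃ : restrictiveCount (k + 1) + freeCount (k + 1) = #(admissibleWords npOk (k + 3)) :=
    restrictiveCount_add_freeCount (k + 1)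
  have := restrictiveCount_succ k
  omega

section LinearRecurrence

variable {a : ℕ → ℝ} {p q r : ℝ} {n₀ : ℕ}

theorem mul_pow_le_of_linear_recurrence {c : ℝ} (hp : 0 ≤ p) (hq : 0 ≤ q)
    (hr : r ^ 2 = p * r + q) (ha : ∀ n ≥ n₀, a (n + 2) = p * a (n + 1) + q * a n)
    (h₀ : c * r ^ n₀ ≤ a n₀) (h₁ : c * r ^ (n₀ + 1) ≤ a (n₀ + 1)) :
    ∀ n ≥ n₀, c * r ^ n ≤ a n := by
  suffices ∀ n ≥ n₀, c * r ^ n ≤ a n ∧ c * r ^ (n + 1) ≤ a (n + 1) from fun n hn => (this n hn).1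
  refine Nat.le_induction ⟨h₀, h₁⟩ fun n hn ⟨hn₀, hn₁⟩ => ⟨hn₁, ?_⟩
  calc c * r ^ (n + 2) = p * (c * r ^ (n + 1)) + q * (c * r ^ n) := by
        linear_combination c * r ^ n * hr
    _ ≤ p * a (n + 1) + q * a n := by gcongr
    _ = a (n + 2) := (ha n hn).symm

theorem pow_mul_le_of_linear_recurrence {C : ℝ} (hp : 0 ≤ p) (hq : 0 ≤ q)
    (hr : r ^ 2 = p * r + q) (ha : ∀ n ≥ n₀, a (n + 2) = p * a (n + 1) + q * a n)
    (h₀ : a n₀ ≤ C * r ^ n₀) (h₁ : a (n₀ + 1) ≤ C * r ^ (n₀ + 1)) :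
    ∀ n ≥ n₀, a n ≤ C * r ^ n := by
  have := mul_pow_le_of_linear_recurrence (a := fun n => -a n) (c := -C) hp hq hr
    (fun n hn => by rw [ha n hn]; ring) (by linarith) (by linarith)
  exact fun n hn => by linarith [this n hn]

theorem tendsto_const_rpow_one_div_natCast {c : ℝ} (hc : c ≠ 0) :
    Tendsto (fun n : ℕ => c ^ (1 / (n : ℝ))) atTop (𝓝 1) := by
  simpa using tendsto_const_nhds.rpow tendsto_one_div_atTop_nhds_zero_nat (Or.inl hc)

theorem mul_pow_rpow_one_div {c : ℝ} (hc : 0 ≤ c) (hr : 0 ≤ r) {n : ℕ} (hn : n ≠ 0) :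
    (c * r ^ n) ^ (1 / (n : ℝ)) = c ^ (1 / (n : ℝ)) * r := by
  rw [Real.mul_rpow hc (by positivity), ← Real.rpow_natCast, ← Real.rpow_mul hr,
    mul_one_div_cancel (by exact_mod_cast hn), Real.rpow_one]

theorem tendsto_rpow_one_div_of_mul_pow_le {c C : ℝ} (hr : 0 < r) (hc : 0 < c) (hC : 0 < C)
    (h : ∀ᶠ n in atTop, c * r ^ n ≤ a n ∧ a n ≤ C * r ^ n) :
    Tendsto (fun n : ℕ => a n ^ (1 / (n : ℝ))) atTop (𝓝 r) := by
  have lower := (tendsto_const_rpow_one_div_natCast hc.ne').mul_const r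
  have upper := (tendsto_const_rpow_one_div_natCast hC.ne').mul_const r
  rw [one_mul] at lower upper
  refine tendsto_of_tendsto_of_tendsto_of_le_of_le' lower upper ?_ ?_ <;>
    filter_upwards [h, eventually_ne_atTop 0] with n ⟨hlo, hhi⟩ hn
  · rw [← mul_pow_rpow_one_div hc.le hr.le hn]
    exact Real.rpow_le_rpow (by positivity) hlo (by positivity)
  · rw [← mul_pow_rpow_one_div hC.le hr.le hn]
    exact Real.rpow_le_rpow (by linarith [mul_pos hc (pow_pos hr n)]) hhi (by positivity)

theorem tendsto_rpow_one_div_of_linear_recurrence (hp : 0 ≤ p) (hq : 0 ≤ q) (hr₀ : 0 < r)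
    (hr : r ^ 2 = p * r + q) (ha : ∀ n ≥ n₀, a (n + 2) = p * a (n + 1) + q * a n)
    (h₀ : 0 < a n₀) (h₁ : 0 < a (n₀ + 1)) :
    Tendsto (fun n : ℕ => a n ^ (1 / (n : ℝ))) atTop (𝓝 r) := by
  have hpow (n : ℕ) : 0 < r ^ n := pow_pos hr₀ n
  set c := min (a n₀ / r ^ n₀) (a (n₀ + 1) / r ^ (n₀ + 1))
  set C := max (a n₀ / r ^ n₀) (a (n₀ + 1) / r ^ (n₀ + 1))
  have hc : 0 < c := lt_min (div_pos h₀ (hpow _)) (div_pos h₁ (hpow _))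
  have hC : 0 < C := hc.trans_le min_le_max
  refine tendsto_rpow_one_div_of_mul_pow_le hr₀ hc hC ?_
  filter_upwards [eventually_ge_atTop n₀] with n hn
  refine ⟨mul_pow_le_of_linear_recurrence hp hq hr ha ?_ ?_ n hn,
    pow_mul_le_of_linear_recurrence hp hq hr ha ?_ ?_ n hn⟩
  · exact (le_div_iff₀ (hpow _)).1 (min_le_left _ _)
  · exact (le_div_iff₀ (hpow _)).1 (min_le_right _ _)
  · exact (div_le_iff₀ (hpow _)).1 (le_max_left _ _)
  · exact (div_le_iff₀ (hpow _)).1 (le_max_right _ _)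

end LinearRecurrence

theorem stmt19 :
    Filter.Tendsto (fun m : ℕ => ((NPC m).ncard : ℝ) ^ (1 / (m : ℝ)))
      Filter.atTop (nhds ((3 + Real.sqrt 17) / 2)) := by
  have hpos (m : ℕ) : (0 : ℝ) < #(admissibleWords npOk m) := by
    exact_mod_cast card_pos.2 ⟨_, mem_admissibleWords.2 (Admissible.of_const (a := 0) rfl m)⟩
  simp_rw [NPC_eq_admissibleWords, Set.ncard_coe_finset]
  refine tendsto_rpow_one_div_of_linear_recurrence (p := 3) (q := 2) (n₀ := 2) (by norm_num)
    (by norm_num) (by positivity) ?_ ?_ (hpos _) (hpos _)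
  · linear_combination Real.sq_sqrt (show (0 : ℝ) ≤ 17 by norm_num) / 4
  · intro n hn
    obtain ⟨k, rfl⟩ := Nat.exists_eq_add_of_le' hn
    exact_mod_cast card_admissibleWords_npOk_recurrence k
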